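/- arXiv:2506.17980 — 7 statements merged into one kernel-verified Lean document; each statement's English description precedes it below -/
import Mathlib

section
/- Let H be a complex Hilbert space, M a von Neumann algebra on H, and ξ ∈ H a unit vector. Let ε ∈ M be an orthogonal projection with εξ = ξ such that for every a ∈ M with εaε ≥ 0 and ⟨εaεξ, ξ⟩ = 0 one has εaε = 0. Let p be the orthogonal projection of H onto the closure of {aξ : a ∈ M} (so p lies in the commutant M' and commutes with ε). Then: (i) εpξ = ξ; (ii) ξ is separating for the compression: for every a ∈ M, if εpaεp ≥ 0 and ⟨εpaεpξ, ξ⟩ = 0 then εpaεp = 0; (iii) ξ is cyclic for the compression: the closure of {εpaεpξ : a ∈ M} equals the range of εp. -/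
/-!
Since `M` is a `*`-algebra, the closure `K` of `Mξ` is invariant under `M` and `M*`, so the
projection `p` onto `K` commutes with `M`; hence `epaep = eaep` and `pξ = ξ`. A positive operator
`x` with `⟪xξ, ξ⟫ = 0` kills `ξ`, so `eaeξ = 0`; faithfulness applied to `a* e a`, whose
compression is `(eae)*(eae)`, then forces `eae = 0`. Cyclicity holds because `epaepξ = eaξ`
and `ep` is an idempotent with range `e K`.
-/

section

open ContinuousLinearMap

variable {H : Type*} [NormedAddCommGroup H] [InnerProductSpace ℂ H] [CompleteSpace H]

theorem ContinuousLinearMap.IsPositive.apply_eq_zero_of_inner_self_eq_zero {T : H →L[ℂ] H}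
    (hT : T.IsPositive) {v : H} (h : inner ℂ (T v) v = 0) : T v = 0 := by
  obtain ⟨s, rfl⟩ := CStarAlgebra.nonneg_iff_eq_star_mul_self.mp ((nonneg_iff_isPositive T).mpr hT)
  have hsv : s v = 0 := by
    rw [← inner_self_eq_zero (𝕜 := ℂ), ← adjoint_inner_left, ← star_eq_adjoint]
    simpa using h
  simp [hsv]

theorem IsSelfAdjoint.commute_of_mul_mul_eq {R : Type*} [Monoid R] [StarMul R] {p a : R}
    (hp : IsSelfAdjoint p) (h : p * a * p = a * p) (h' : p * star a * p = star a * p) :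
    Commute p a := by
  have hstar : p * a * p = p * a := by
    simpa [star_mul, hp.star_eq, mul_assoc] using congrArg star h'
  exact hstar.symm.trans h

section CyclicProjection

variable {A : StarSubalgebra ℂ (H →L[ℂ] H)} {ξ : H} {p : H →L[ℂ] H}
  (hpran : ∀ η : H, p η ∈ closure ((fun a : H →L[ℂ] H => a ξ) '' (A : Set (H →L[ℂ] H))))
  (hpfix : ∀ η ∈ closure ((fun a : H →L[ℂ] H => a ξ) '' (A : Set (H →L[ℂ] H))), p η = η)
include hpfix

theorem apply_apply_eq_of_cyclicProjection {a : H →L[ℂ] H} (ha : a ∈ A) : p (a ξ) = a ξ :=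
  hpfix _ (subset_closure ⟨a, ha, rfl⟩)

include hpran

theorem mul_mul_eq_of_cyclicProjection {a : H →L[ℂ] H} (ha : a ∈ A) : p * a * p = a * p := by
  have hinv : Set.MapsTo a ((fun b : H →L[ℂ] H => b ξ) '' (A : Set (H →L[ℂ] H)))
      ((fun b : H →L[ℂ] H => b ξ) '' (A : Set (H →L[ℂ] H))) := by
    rintro _ ⟨b, hb, rfl⟩
    exact ⟨a * b, mul_mem ha hb, rfl⟩
  ext η
  exact hpfix _ (map_mem_closure a.continuous (hpran η) hinv)

theorem commute_of_cyclicProjection (hpSA : IsSelfAdjoint p) {a : H →L[ℂ] H} (ha : a ∈ A) :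
    Commute p a :=
  hpSA.commute_of_mul_mul_eq (mul_mul_eq_of_cyclicProjection hpran hpfix ha)
    (mul_mul_eq_of_cyclicProjection hpran hpfix (star_mem ha))

theorem closure_image_apply_eq_range_of_cyclicProjection {e : H →L[ℂ] H}
    (hep : IsIdempotentElem (e * p)) :
    closure ((fun a : H →L[ℂ] H => e (a ξ)) '' (A : Set (H →L[ℂ] H))) = Set.range (e * p) := by
  apply subset_antisymm
  · have hclosed : IsClosed (Set.range (e * p)) := by
      simpa only [LinearMap.coe_range, coe_coe] using hep.isClosed_range
    refine closure_minimal ?_ hclosed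
    rintro _ ⟨a, ha, rfl⟩
    exact ⟨a ξ, by simp [apply_apply_eq_of_cyclicProjection hpfix ha]⟩
  · rintro _ ⟨η, rfl⟩
    have := map_mem_closure e.continuous (hpran η) (Set.mapsTo_image e _)
    simpa [Set.image_image] using this

end CyclicProjection

theorem compression_eq_zero_of_apply_eq_zero {A : StarSubalgebra ℂ (H →L[ℂ] H)} {ξ : H}
    {e : H →L[ℂ] H} (heSA : IsSelfAdjoint e)
    (hfaith : ∀ a : H →L[ℂ] H, a ∈ A → (e * a * e).IsPositive →
      (inner ℂ ((e * a * e) ξ) ξ : ℂ) = 0 → e * a * e = 0)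
    (he : e ∈ A) {c : H →L[ℂ] H} (hc : c ∈ A) (h : (e * c * e) ξ = 0) : e * c * e = 0 := by
  have hconj : star (e * c * e) * (e * c * e) = e * (star c * e * e * c) * e := by
    simp only [star_mul, heSA.star_eq, mul_assoc]
  have hmem : star c * e * e * c ∈ A := mul_mem (mul_mem (mul_mem (star_mem hc) he) he) hc
  have hpos : (e * (star c * e * e * c) * e).IsPositive := by
    rw [← hconj, ← nonneg_iff_isPositive]
    exact star_mul_self_nonneg _
  have hzero : (e * (star c * e * e * c) * e) ξ = 0 := by
    rw [← hconj, mul_apply_eq_comp, h, map_zero]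
  rw [← CStarRing.star_mul_self_eq_zero_iff, hconj]
  exact hfaith _ hmem hpos (by rw [hzero, inner_zero_left])

end

theorem stmt_1_general {H : Type*} [NormedAddCommGroup H] [InnerProductSpace ℂ H] [CompleteSpace H]
    (M : VonNeumannAlgebra H) (ξ : H)
    (e : H →L[ℂ] H) (he : e ∈ M) (heSA : IsSelfAdjoint e) (heIdem : e * e = e)
    (heξ : e ξ = ξ)
    (hfaith : ∀ a : H →L[ℂ] H, a ∈ M → (e * a * e).IsPositive →
      (inner ℂ ((e * a * e) ξ) ξ : ℂ) = 0 → e * a * e = 0)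
    (p : H →L[ℂ] H) (hpSA : IsSelfAdjoint p) (hpIdem : p * p = p)
    (hpran : ∀ η : H, p η ∈ closure ((fun a : H →L[ℂ] H => a ξ) '' (M : Set (H →L[ℂ] H))))
    (hpfix : ∀ η ∈ closure ((fun a : H →L[ℂ] H => a ξ) '' (M : Set (H →L[ℂ] H))), p η = η) :
    (e * p) ξ = ξ ∧
    (∀ a : H →L[ℂ] H, a ∈ M → (e * p * a * (e * p)).IsPositive →
        (inner ℂ ((e * p * a * (e * p)) ξ) ξ : ℂ) = 0 → e * p * a * (e * p) = 0) ∧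
    closure ((fun a : H →L[ℂ] H => (e * p * a * (e * p)) ξ) '' (M : Set (H →L[ℂ] H)))
      = Set.range (e * p) := by
  have hpξ : p ξ = ξ := by
    simpa using apply_apply_eq_of_cyclicProjection hpfix (one_mem M.toStarSubalgebra)
  have hepξ : (e * p) ξ = ξ := by rw [mul_apply_eq_comp, hpξ, heξ]
  have hcomm {a : H →L[ℂ] H} (ha : a ∈ M) : Commute p a :=
    commute_of_cyclicProjection hpran hpfix hpSA ha
  have hcompress {a : H →L[ℂ] H} (ha : a ∈ M) : e * p * a * (e * p) = e * a * e * p := by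
    rw [mul_assoc, mul_assoc, (hcomm ha).left_comm, (hcomm he).left_comm, hpIdem]
    simp only [mul_assoc]
  refine ⟨hepξ, fun a ha hpos hinner => ?_, ?_⟩
  · have hξ0 := hpos.apply_eq_zero_of_inner_self_eq_zero hinner
    rw [hcompress ha, mul_apply_eq_comp, hpξ] at hξ0
    rw [hcompress ha, compression_eq_zero_of_apply_eq_zero heSA hfaith he ha hξ0, zero_mul]
  · have hidem : IsIdempotentElem (e * p) :=
      IsIdempotentElem.mul_of_commute (hcomm he).symm heIdem hpIdem
    rw [← closure_image_apply_eq_range_of_cyclicProjection hpran hpfix hidem]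
    refine congrArg closure (Set.image_congr fun a ha => ?_)
    rw [mul_apply_eq_comp, hepξ, mul_apply_eq_comp, mul_apply_eq_comp,
      apply_apply_eq_of_cyclicProjection hpfix ha]

/-- Let `M` be a von Neumann algebra on a complex Hilbert space `H`, `ξ` a unit vector,
`e ∈ M` an orthogonal projection with `eξ = ξ` such that the vector state is faithful on
the corner `eMe`, and let `p` be the orthogonal projection of `H` onto the closure of
`{aξ : a ∈ M}`.  Then `(ep)ξ = ξ`, `ξ` is separating for the compression
`ep M ep`, and `ξ` is cyclic for the compression: the closure of `{ep a ep ξ : a ∈ M}`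
equals the range of `ep`. -/
theorem stmt_1 {H : Type*} [NormedAddCommGroup H] [InnerProductSpace ℂ H] [CompleteSpace H]
    (M : VonNeumannAlgebra H) (ξ : H) (hξ : ‖ξ‖ = 1)
    (e : H →L[ℂ] H) (he : e ∈ M) (heSA : IsSelfAdjoint e) (heIdem : e * e = e)
    (heξ : e ξ = ξ)
    (hfaith : ∀ a : H →L[ℂ] H, a ∈ M → (e * a * e).IsPositive →
      (inner ℂ ((e * a * e) ξ) ξ : ℂ) = 0 → e * a * e = 0)
    (p : H →L[ℂ] H) (hpSA : IsSelfAdjoint p) (hpIdem : p * p = p)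
    (hpran : ∀ η : H, p η ∈ closure ((fun a : H →L[ℂ] H => a ξ) '' (M : Set (H →L[ℂ] H))))
    (hpfix : ∀ η ∈ closure ((fun a : H →L[ℂ] H => a ξ) '' (M : Set (H →L[ℂ] H))), p η = η) :
    (e * p) ξ = ξ ∧
    (∀ a : H →L[ℂ] H, a ∈ M → (e * p * a * (e * p)).IsPositive →
        (inner ℂ ((e * p * a * (e * p)) ξ) ξ : ℂ) = 0 → e * p * a * (e * p) = 0) ∧
    closure ((fun a : H →L[ℂ] H => (e * p * a * (e * p)) ξ) '' (M : Set (H →L[ℂ] H)))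
      = Set.range (e * p) :=
  stmt_1_general M ξ e he heSA heIdem heξ hfaith p hpSA hpIdem hpran hpfix
end

section
/- Let H be a complex Hilbert space, M a von Neumann algebra on H, and ξ ∈ H. Let ε ∈ M be an orthogonal projection with εξ = ξ such that for every positive a ∈ M with ⟨aξ, ξ⟩ = 0 one has εaε = 0. Suppose that for every selfadjoint a ∈ M and every δ > 0 there exists b in the commutant M' with ‖aξ − bξ‖ < δ. Then εa = aε for every a ∈ M. -/
/-!
Let `V` be the closure of `M' ξ` and `P` the orthogonal projection onto `V`. Since `M'` is a
`*`-algebra, `V` is `M'`-invariant, so `P ∈ M'' = M`; the approximation hypothesis puts `a ξ` in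
`V` for every `a ∈ M`, so `V` is also `M`-invariant and `P ∈ M'`. As `ξ ∈ V`, the support
hypothesis applied to `1 - P` gives `(1 - P) e = 0`, i.e. `P e = e`, while `e` fixes `V` pointwise
because it commutes with `M'` and fixes `ξ`, i.e. `e P = P`. Taking adjoints, `e = P ∈ M'`.
-/

open ContinuousLinearMap ComplexStarModule

namespace Subalgebra

variable {𝕜 E : Type*} [NontriviallyNormedField 𝕜] [NormedAddCommGroup E] [NormedSpace 𝕜 E]
  (A : Subalgebra 𝕜 (E →L[𝕜] E)) (ξ : E)

noncomputable def cyclicSubspace : Submodule 𝕜 E :=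
  ((Subalgebra.toSubmodule A).map (apply 𝕜 E ξ : (E →L[𝕜] E) →ₗ[𝕜] E)).topologicalClosure

variable {A ξ}

lemma apply_mem_cyclicSubspace {a : E →L[𝕜] E} (ha : a ∈ A) : a ξ ∈ A.cyclicSubspace ξ :=
  Submodule.le_topologicalClosure _ (Submodule.mem_map_of_mem (p := Subalgebra.toSubmodule A) ha)

lemma self_mem_cyclicSubspace : ξ ∈ A.cyclicSubspace ξ :=
  apply_mem_cyclicSubspace A.one_mem

lemma mem_cyclicSubspace_iff {x : E} :
    x ∈ A.cyclicSubspace ξ ↔ ∀ δ > 0, ∃ b ∈ A, ‖x - b ξ‖ < δ := by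
  simp only [← SetLike.mem_coe, cyclicSubspace, Submodule.topologicalClosure_coe,
    Metric.mem_closure_iff, Submodule.map_coe, Set.exists_mem_image, dist_eq_norm]
  rfl

lemma cyclicSubspace_le_of_forall {V : Submodule 𝕜 E} (hV : IsClosed (V : Set E))
    (h : ∀ a ∈ A, a ξ ∈ V) : A.cyclicSubspace ξ ≤ V :=
  Submodule.topologicalClosure_minimal _ (by rintro _ ⟨a, ha, rfl⟩; exact h a ha) hV

lemma cyclicSubspace_mem_invtSubmodule_of_forall {T : E →L[𝕜] E}
    (h : ∀ a ∈ A, T (a ξ) ∈ A.cyclicSubspace ξ) :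
    A.cyclicSubspace ξ ∈ Module.End.invtSubmodule (T : E →ₗ[𝕜] E) :=
  (Module.End.mem_invtSubmodule _).2 <| cyclicSubspace_le_of_forall
    ((Submodule.isClosed_topologicalClosure _).preimage T.continuous) h

lemma cyclicSubspace_mem_invtSubmodule {T : E →L[𝕜] E} (hT : T ∈ A) :
    A.cyclicSubspace ξ ∈ Module.End.invtSubmodule (T : E →ₗ[𝕜] E) :=
  cyclicSubspace_mem_invtSubmodule_of_forall fun _ ha => apply_mem_cyclicSubspace (A.mul_mem hT ha)

lemma cyclicSubspace_mem_invtSubmodule_of_commute {T : E →L[𝕜] E} (hT : ∀ a ∈ A, Commute T a)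
    (hTξ : T ξ ∈ A.cyclicSubspace ξ) :
    A.cyclicSubspace ξ ∈ Module.End.invtSubmodule (T : E →ₗ[𝕜] E) :=
  cyclicSubspace_mem_invtSubmodule_of_forall fun a ha => by
    rw [← mul_apply_eq_comp, hT a ha, mul_apply_eq_comp]
    exact (Module.End.mem_invtSubmodule _).1 (cyclicSubspace_mem_invtSubmodule ha) hTξ

instance [CompleteSpace E] : CompleteSpace (A.cyclicSubspace ξ) :=
  Submodule.topologicalClosure.completeSpace _

lemma apply_eq_self_of_mem_cyclicSubspace {T : E →L[𝕜] E} (hT : ∀ a ∈ A, Commute T a)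
    (hTξ : T ξ = ξ) {v : E} (hv : v ∈ A.cyclicSubspace ξ) : T v = v := by
  have : A.cyclicSubspace ξ ≤ (T - 1).ker :=
    cyclicSubspace_le_of_forall (T - 1).isClosed_ker fun a ha => by
      rw [LinearMap.mem_ker, coe_coe, sub_apply, ← mul_apply_eq_comp, hT a ha,
        mul_apply_eq_comp, hTξ, one_apply_eq_self, sub_self]
  simpa [sub_eq_zero] using this hv

end Subalgebra

lemma StarSubalgebra.mem_of_forall_isSelfAdjoint {A : Type*} [Ring A] [StarRing A] [Algebra ℂ A]
    [StarModule ℂ A] (S : StarSubalgebra ℂ A) {p : Submodule ℂ A}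
    (h : ∀ a ∈ S, IsSelfAdjoint a → a ∈ p) {a : A} (ha : a ∈ S) : a ∈ p := by
  have hre : (ℜ a : A) ∈ S := by
    rw [realPart_apply_coe, ← algebraMap_smul ℂ]
    exact S.smul_mem (add_mem ha (star_mem ha)) _
  have him : (ℑ a : A) ∈ S := by
    rw [imaginaryPart_apply_coe, ← algebraMap_smul ℂ]
    exact S.smul_mem (S.smul_mem (sub_mem ha (star_mem ha)) _) _
  rw [← realPart_add_I_smul_imaginaryPart a]
  exact add_mem (h _ hre (ℜ a).2) (p.smul_mem _ (h _ him (ℑ a).2))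

lemma IsStarProjection.mul_eq_zero_of_mul_mul_eq_zero {A : Type*} [NonUnitalNormedRing A]
    [StarRing A] [CStarRing A] {q e : A} (hq : IsStarProjection q) (he : IsSelfAdjoint e)
    (h : e * q * e = 0) : q * e = 0 := by
  rw [← CStarRing.star_mul_self_eq_zero_iff, star_mul, he.star_eq, hq.isSelfAdjoint.star_eq,
    mul_assoc, ← mul_assoc q, hq.isIdempotentElem.eq, ← mul_assoc, h]

namespace VonNeumannAlgebra

variable {H : Type*} [NormedAddCommGroup H] [InnerProductSpace ℂ H] [CompleteSpace H]

lemma starProjection_cyclicSubspace_mem_commutant (N : VonNeumannAlgebra H) (ξ : H) :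
    (N.toSubalgebra.cyclicSubspace ξ).starProjection ∈ N.commutant :=
  (IsStarProjection.mem_iff isStarProjection_starProjection _).2 fun b hb => by
    rw [Submodule.range_starProjection]
    exact Subalgebra.cyclicSubspace_mem_invtSubmodule (by rwa [commutant_commutant] at hb)

lemma starProjection_cyclicSubspace_commutant_mem_commutant (M : VonNeumannAlgebra H) {ξ : H}
    (h : ∀ a ∈ M, a ξ ∈ M.commutant.toSubalgebra.cyclicSubspace ξ) :
    (M.commutant.toSubalgebra.cyclicSubspace ξ).starProjection ∈ M.commutant :=
  (IsStarProjection.mem_iff isStarProjection_starProjection _).2 fun a ha => by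
    rw [commutant_commutant] at ha
    rw [Submodule.range_starProjection]
    exact Subalgebra.cyclicSubspace_mem_invtSubmodule_of_commute
      (fun b hb => mem_commutant_iff.1 hb a ha) (h a ha)

end VonNeumannAlgebra

open VonNeumannAlgebra in
theorem stmt_2_general {H : Type*} [NormedAddCommGroup H] [InnerProductSpace ℂ H] [CompleteSpace H]
    (M : VonNeumannAlgebra H) (ξ : H)
    (e : H →L[ℂ] H) (he : e ∈ M) (heSA : IsSelfAdjoint e)
    (heξ : e ξ = ξ)
    (hsupp : ∀ a : H →L[ℂ] H, a ∈ M → a.IsPositive →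
      (inner ℂ (a ξ) ξ : ℂ) = 0 → e * a * e = 0)
    (happrox : ∀ a : H →L[ℂ] H, a ∈ M → IsSelfAdjoint a →
      ∀ δ : ℝ, 0 < δ → ∃ b ∈ M.commutant, ‖a ξ - b ξ‖ < δ) :
    ∀ a : H →L[ℂ] H, a ∈ M → e * a = a * e := by
  set V := M.commutant.toSubalgebra.cyclicSubspace ξ
  have hPM : V.starProjection ∈ M := by
    simpa using starProjection_cyclicSubspace_mem_commutant M.commutant ξ
  have hPM' : V.starProjection ∈ M.commutant :=
    starProjection_cyclicSubspace_commutant_mem_commutant M fun a ha =>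
      M.toStarSubalgebra.mem_of_forall_isSelfAdjoint
        (p := V.comap (apply ℂ H ξ : (H →L[ℂ] H) →ₗ[ℂ] H))
        (fun a ha hsa => Subalgebra.mem_cyclicSubspace_iff.2 (happrox a ha hsa)) ha
  have hQe : Vᗮ.starProjection * e = 0 := by
    refine isStarProjection_starProjection.mul_eq_zero_of_mul_mul_eq_zero heSA (hsupp _ ?_
      (.of_isStarProjection isStarProjection_starProjection) ?_)
    · rw [Submodule.starProjection_orthogonal']
      exact sub_mem (one_mem M) hPM
    · rw [Submodule.starProjection_orthogonal_apply_eq_zero Subalgebra.self_mem_cyclicSubspace,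
        inner_zero_left]
  have hPe : V.starProjection * e = e := by
    rwa [Submodule.starProjection_orthogonal', sub_mul, one_mul, sub_eq_zero, eq_comm] at hQe
  have heP : e * V.starProjection = V.starProjection := ContinuousLinearMap.ext fun x =>
    Subalgebra.apply_eq_self_of_mem_cyclicSubspace (fun b hb => mem_commutant_iff.1 hb e he) heξ
      (V.starProjection_apply_mem x)
  have he_eq : e = V.starProjection := calc
    e = star (V.starProjection * e) := by rw [hPe, heSA.star_eq]
    _ = V.starProjection := by
      rw [star_mul, heSA.star_eq, isStarProjection_starProjection.isSelfAdjoint.star_eq, heP]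
  intro a ha
  rw [he_eq]
  exact (mem_commutant_iff.1 hPM' a ha).symm

/-- Let `M` be a von Neumann algebra on a complex Hilbert space `H`, `ξ ∈ H`, and `e ∈ M`
an orthogonal projection with `eξ = ξ` which is the support of the vector functional
(i.e. every positive `a ∈ M` with `⟨aξ,ξ⟩ = 0` satisfies `eae = 0`).  If every selfadjoint
`a ∈ M` has `aξ` approximable by vectors `bξ` with `b` in the commutant `M'`, then `e`
commutes with every element of `M`. -/
theorem stmt_2 {H : Type*} [NormedAddCommGroup H] [InnerProductSpace ℂ H] [CompleteSpace H]
    (M : VonNeumannAlgebra H) (ξ : H)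
    (e : H →L[ℂ] H) (he : e ∈ M) (heSA : IsSelfAdjoint e) (heIdem : e * e = e)
    (heξ : e ξ = ξ)
    (hsupp : ∀ a : H →L[ℂ] H, a ∈ M → a.IsPositive →
      (inner ℂ (a ξ) ξ : ℂ) = 0 → e * a * e = 0)
    (happrox : ∀ a : H →L[ℂ] H, a ∈ M → IsSelfAdjoint a →
      ∀ δ : ℝ, 0 < δ → ∃ b ∈ M.commutant, ‖a ξ - b ξ‖ < δ) :
    ∀ a : H →L[ℂ] H, a ∈ M → e * a = a * e :=
  stmt_2_general M ξ e he heSA heξ hsupp happrox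
end

section
/- Let H, K, L be nonzero finite-dimensional complex Hilbert spaces and let W : H → K ⊗ L be an isometry such that for every linear operator b on H there exists a linear operator b' on K with W b W* = b' ⊗ 1_L. Then dim L = 1. -/
open Matrix Kronecker

/-- (Matrix formulation, identifying the nonzero finite-dimensional complex Hilbert spaces
`H, K, L` with coordinate spaces indexed by `ι, κ, μ`, linear maps with matrices, tensor
products with Kronecker products, and adjoints with conjugate transposes.)
If `W : H → K ⊗ L` is an isometry such that for every operator `b` on `H` there is an
operator `b'` on `K` with `W b W* = b' ⊗ 1_L`, then `dim L = 1`. -/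
theorem stmt_4 {ι κ μ : Type*} [Fintype ι] [Fintype κ] [Fintype μ]
    [DecidableEq ι] [DecidableEq κ] [DecidableEq μ]
    [Nonempty ι] [Nonempty κ] [Nonempty μ]
    (W : Matrix (κ × μ) ι ℂ) (hW : Wᴴ * W = 1)
    (hloc : ∀ b : Matrix ι ι ℂ, ∃ b' : Matrix κ κ ℂ,
        W * b * Wᴴ = b' ⊗ₖ (1 : Matrix μ μ ℂ)) :
    Fintype.card μ = 1 := by
  obtain ⟨i⟩ := ‹Nonempty ι›
  obtain ⟨b', hb'⟩ := hloc (Matrix.single i i 1)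
  -- entrywise identity
  have key : ∀ p q : κ × μ, W p i * star (W q i)
      = if p.2 = q.2 then b' p.1 q.1 else 0 := by
    intro p q
    have := congrFun (congrFun hb' p) q
    simpa [Matrix.mul_apply, Matrix.conjTranspose_apply, Matrix.single,
      Matrix.of_apply, Matrix.kroneckerMap_apply, Matrix.one_apply,
      Finset.sum_ite_eq, Finset.sum_ite_eq', ite_and] using this
  -- v ≠ 0 somewhere
  have hne : ∃ p : κ × μ, W p i ≠ 0 := by
    by_contra h
    push_neg at h
    have := congrFun (congrFun hW i) i
    simp [Matrix.mul_apply, Matrix.conjTranspose_apply, h] at this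
  obtain ⟨p0, hp0⟩ := hne
  rw [Fintype.card_eq_one_iff]
  refine ⟨p0.2, fun m => ?_⟩
  by_contra hm
  -- entries in slice m vanish
  have hz : ∀ k : κ, W (k, m) i = 0 := by
    intro k
    have h := key p0 (k, m)
    rw [if_neg (fun h => hm h.symm)] at h
    rcases mul_eq_zero.mp h with h | h
    · exact absurd h hp0
    · simpa using h
  -- b' diagonal at p0.1 is zero
  have h1 : b' p0.1 p0.1 = 0 := by
    have h := key (p0.1, m) (p0.1, m)
    rw [hz p0.1, if_pos rfl] at h
    simpa using h.symm
  -- but also nonzero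
  have h2 := key p0 p0
  rw [if_pos rfl, h1] at h2
  rcases mul_eq_zero.mp h2 with h | h
  · exact hp0 h
  · exact hp0 (star_eq_zero.mp h)
end

section
/- Let H_A, H_B, K_A, K_B, L_0, L̃_0 be nonzero finite-dimensional complex Hilbert spaces and let V : H_A ⊗ H_B → K_A ⊗ K_B be a linear map. Suppose V = T_{2,2} ∘ T_{1,2} = T_{2,1} ∘ T_{1,1}, where: T_{1,2} : H_A ⊗ H_B → H_A ⊗ K_B ⊗ L_0 is an isometry with T_{1,2}(a ⊗ 1_{H_B}) = (a ⊗ 1_{K_B} ⊗ 1_{L_0})T_{1,2} for every operator a on H_A, and for every operator b on H_B there is an operator b' on K_B with T_{1,2}(1_{H_A} ⊗ b)T_{1,2}* = 1_{H_A} ⊗ b' ⊗ 1_{L_0}; T_{2,2} : H_A ⊗ K_B ⊗ L_0 → K_A ⊗ K_B is an isometry with T_{2,2}(1_{H_A} ⊗ b ⊗ 1_{L_0}) = (1_{K_A} ⊗ b)T_{2,2} for every operator b on K_B, and for every operator a on H_A there is an operator a' on K_A with T_{2,2}(a ⊗ 1_{K_B} ⊗ 1_{L_0})T_{2,2}* =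 a' ⊗ 1_{K_B}; T_{1,1} : H_A ⊗ H_B → K_A ⊗ H_B ⊗ L̃_0 is an isometry with T_{1,1}(1_{H_A} ⊗ b) = (1_{K_A} ⊗ b ⊗ 1_{L̃_0})T_{1,1} for every operator b on H_B, and for every operator a on H_A there is a' on K_A with T_{1,1}(a ⊗ 1_{H_B})T_{1,1}* = a' ⊗ 1_{H_B} ⊗ 1_{L̃_0}; and T_{2,1} : K_A ⊗ H_B ⊗ L̃_0 → K_A ⊗ K_B is an isometry with T_{2,1}(a ⊗ 1_{H_B} ⊗ 1_{L̃_0}) = (a ⊗ 1_{K_B})T_{2,1} for every operator a on K_A, and for every operator b on H_B there is b' on K_B with T_{2,1}(1_{K_A} ⊗ b ⊗ 1_{L̃_0})T_{2,1}* = 1_{K_A} ⊗ b'. Then there exist isometries V_A : H_A → K_A and V_B : H_B → K_B such that V = V_A ⊗ V_B. -/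
/-!
Commuting with every `a ⊗ 1` forces `T₁₂ = 1 ⊗ R`, and commuting with every `1 ⊗ b ⊗ 1` makes
`T₂₂` diagonal in the `K_B` factor. Testing the locality of `T₁₂` on the rank-one operators
`b = |m⟩⟨m'|` shows that `|R m⟩⟨R m'|` has no off-diagonal `L_0`-blocks, so all columns of `R`
live in a single slice `K_B ⊗ |s₀⟩`. On that slice `V = T₂₂ (1 ⊗ R)` reads `V_A ⊗ V_B`, and `V_A`
is an isometry because `V` and `V_B` are.
-/

open Matrix Kronecker

namespace Matrix

variable {α : Type*} {l m n p : Type*}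

theorem one_kronecker_injective [MulZeroOneClass α] [DecidableEq l] [Nonempty l] :
    Function.Injective fun B : Matrix m n α => (1 : Matrix l l α) ⊗ₖ B := by
  intro B B' h
  obtain ⟨k⟩ := ‹Nonempty l›
  ext i j
  simpa using congr_fun₂ h (k, i) (k, j)

theorem kronecker_one_injective [MulZeroOneClass α] [DecidableEq n] [Nonempty n] :
    Function.Injective fun A : Matrix l m α => A ⊗ₖ (1 : Matrix n n α) := by
  intro A A' h
  obtain ⟨k⟩ := ‹Nonempty n›
  ext i j
  simpa using congr_fun₂ h (i, k) (j, k)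

theorem kronecker_conjTranspose_mul_self [CommSemiring α] [StarRing α] [Fintype l] [Fintype n]
    (A : Matrix l m α) (B : Matrix n p α) :
    (A ⊗ₖ B)ᴴ * (A ⊗ₖ B) = (Aᴴ * A) ⊗ₖ (Bᴴ * B) := by
  rw [conjTranspose_kronecker, mul_kronecker_mul]

theorem one_kronecker_conjTranspose_mul_self_eq_one_iff [CommSemiring α] [StarRing α]
    [Fintype l] [DecidableEq l] [Nonempty l] [Fintype n] [DecidableEq m] (R : Matrix n m α) :
    ((1 : Matrix l l α) ⊗ₖ R)ᴴ * ((1 : Matrix l l α) ⊗ₖ R) = 1 ↔ Rᴴ * R = 1 := by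
  rw [kronecker_conjTranspose_mul_self, conjTranspose_one, one_mul, ← one_kronecker_one]
  exact one_kronecker_injective.eq_iff

theorem conjTranspose_mul_self_eq_one_of_kronecker [CommSemiring α] [StarRing α] [Fintype l]
    [DecidableEq m] [Fintype n] [DecidableEq p] [Nonempty p]
    {A : Matrix l m α} {B : Matrix n p α} (hB : Bᴴ * B = 1)
    (h : (A ⊗ₖ B)ᴴ * (A ⊗ₖ B) = 1) : Aᴴ * A = 1 := by
  rw [kronecker_conjTranspose_mul_self, hB, ← one_kronecker_one] at h
  exact kronecker_one_injective h

theorem one_kronecker_mul_mul_conjTranspose [CommSemiring α] [StarRing α] [Fintype l]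
    [DecidableEq l] [Fintype m] (R : Matrix n m α) (b : Matrix m m α) :
    ((1 : Matrix l l α) ⊗ₖ R) * ((1 : Matrix l l α) ⊗ₖ b) * ((1 : Matrix l l α) ⊗ₖ R)ᴴ
      = (1 : Matrix l l α) ⊗ₖ (R * b * Rᴴ) := by
  rw [conjTranspose_kronecker, conjTranspose_one, ← mul_kronecker_mul, ← mul_kronecker_mul,
    one_mul, one_mul]

theorem exists_eq_one_kronecker_of_forall_commute [CommSemiring α] [Fintype l] [DecidableEq l]
    [Fintype m] [DecidableEq m] [Fintype n] [DecidableEq n] [Nonempty l]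
    (T : Matrix (l × n) (l × m) α)
    (hT : ∀ a : Matrix l l α, T * (a ⊗ₖ (1 : Matrix m m α)) = (a ⊗ₖ (1 : Matrix n n α)) * T) :
    ∃ R : Matrix n m α, T = 1 ⊗ₖ R := by
  obtain ⟨k⟩ := ‹Nonempty l›
  refine ⟨of fun i j => T (k, i) (k, j), ?_⟩
  ext ⟨x, i⟩ ⟨y, j⟩
  have h := congr_fun₂ (hT (single y k 1)) (x, i) (k, j)
  simpa [mul_apply, Fintype.sum_prod_type, single, one_apply, ite_and, eq_comm] using h.symm

theorem exists_apply_eq_ite_of_forall_commute [CommSemiring α] [Fintype l] [DecidableEq l]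
    [Fintype m] [DecidableEq m] [Fintype n] [DecidableEq n] [Fintype p] [DecidableEq p]
    [Nonempty n] (T : Matrix (l × n) (m × (n × p)) α)
    (hT : ∀ b : Matrix n n α,
      T * ((1 : Matrix m m α) ⊗ₖ (b ⊗ₖ (1 : Matrix p p α))) = ((1 : Matrix l l α) ⊗ₖ b) * T) :
    ∃ S : Matrix l (m × p) α, ∀ i y k q s,
      T (i, y) (k, (q, s)) = if y = q then S i (k, s) else 0 := by
  obtain ⟨q₀⟩ := ‹Nonempty n›
  refine ⟨of fun i ks => T (i, q₀) (ks.1, (q₀, ks.2)), fun i y k q s => ?_⟩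
  have h := congr_fun₂ (hT (single q q₀ 1)) (i, y) (k, (q₀, s))
  simpa [mul_apply, Fintype.sum_prod_type, single, one_apply, ite_and, eq_comm] using h.symm

theorem mul_single_mul_conjTranspose_apply [CommSemiring α] [StarRing α] [Fintype m]
    [DecidableEq m] (R : Matrix n m α) (j j' : m) (x y : n) :
    (R * single j j' (1 : α) * Rᴴ) x y = R x j * star (R y j') := by
  simp [mul_apply, single, ite_and]

theorem exists_forall_ne_apply_eq_zero_of_conj_eq_kronecker_one [CommSemiring α] [StarRing α]
    [NoZeroDivisors α] [Fintype m] [DecidableEq m] [DecidableEq p]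
    (R : Matrix (n × p) m α) (hR : R ≠ 0)
    (hconj : ∀ b : Matrix m m α, ∃ b' : Matrix n n α, R * b * Rᴴ = b' ⊗ₖ (1 : Matrix p p α)) :
    ∃ s₀, ∀ q s j, s ≠ s₀ → R (q, s) j = 0 := by
  have hcross : ∀ q s j q' s' j', s ≠ s' → R (q, s) j * star (R (q', s') j') = 0 := by
    intro q s j q' s' j' hss
    obtain ⟨b', hb'⟩ := hconj (single j j' (1 : α))
    have h := congr_fun₂ hb' (q, s) (q', s')
    rwa [mul_single_mul_conjTranspose_apply, kronecker_apply, one_apply_ne hss, mul_zero] at h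
  obtain ⟨⟨q₀, s₀⟩, j₀, hne⟩ : ∃ x j, R x j ≠ 0 := by
    by_contra! h
    exact hR (ext h)
  refine ⟨s₀, fun q s j hs => ?_⟩
  exact (mul_eq_zero.1 (hcross q s j q₀ s₀ j₀ hs)).resolve_right (star_ne_zero.2 hne)

end Matrix

/-- Hilbert spaces are coordinate spaces: `H_A, H_B, K_A, K_B, L_0` are indexed by
`iA, iB, jA, jB, e`; tensor products are Kronecker products and adjoints conjugate transposes. -/
theorem stmt_5_general {iA iB jA jB e : Type*}
    [Fintype iA] [Fintype iB] [Fintype jA] [Fintype jB] [Fintype e]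
    [DecidableEq iA] [DecidableEq iB] [DecidableEq jA] [DecidableEq jB]
    [DecidableEq e]
    [Nonempty iA] [Nonempty iB] [Nonempty jB]
    (V : Matrix (jA × jB) (iA × iB) ℂ)
    (T12 : Matrix (iA × (jB × e)) (iA × iB) ℂ)
    (T22 : Matrix (jA × jB) (iA × (jB × e)) ℂ)
    (hV12 : V = T22 * T12)
    (hT12iso : T12ᴴ * T12 = 1)
    (hT12mod : ∀ a : Matrix iA iA ℂ,
        T12 * (a ⊗ₖ (1 : Matrix iB iB ℂ)) = (a ⊗ₖ (1 : Matrix (jB × e) (jB × e) ℂ)) * T12)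
    (hT12loc : ∀ b : Matrix iB iB ℂ, ∃ b' : Matrix jB jB ℂ,
        T12 * ((1 : Matrix iA iA ℂ) ⊗ₖ b) * T12ᴴ
          = (1 : Matrix iA iA ℂ) ⊗ₖ (b' ⊗ₖ (1 : Matrix e e ℂ)))
    (hT22iso : T22ᴴ * T22 = 1)
    (hT22mod : ∀ b : Matrix jB jB ℂ,
        T22 * ((1 : Matrix iA iA ℂ) ⊗ₖ (b ⊗ₖ (1 : Matrix e e ℂ)))
          = ((1 : Matrix jA jA ℂ) ⊗ₖ b) * T22) :
    ∃ (VA : Matrix jA iA ℂ) (VB : Matrix jB iB ℂ),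
      VAᴴ * VA = 1 ∧ VBᴴ * VB = 1 ∧ V = VA ⊗ₖ VB := by
  obtain ⟨R, rfl⟩ := exists_eq_one_kronecker_of_forall_commute T12 hT12mod
  obtain ⟨S, hS⟩ := exists_apply_eq_ite_of_forall_commute T22 hT22mod
  have hRiso : Rᴴ * R = 1 := (one_kronecker_conjTranspose_mul_self_eq_one_iff R).1 hT12iso
  have hRconj : ∀ b : Matrix iB iB ℂ, ∃ b', R * b * Rᴴ = b' ⊗ₖ (1 : Matrix e e ℂ) := fun b => by
    obtain ⟨b', hb'⟩ := hT12loc b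
    rw [one_kronecker_mul_mul_conjTranspose] at hb'
    exact ⟨b', one_kronecker_injective hb'⟩
  obtain ⟨s₀, hR⟩ := exists_forall_ne_apply_eq_zero_of_conj_eq_kronecker_one R
    (by rintro rfl; simp at hRiso) hRconj
  let VA : Matrix jA iA ℂ := of fun p k => S p (k, s₀)
  let VB : Matrix jB iB ℂ := of fun q j => R (q, s₀) j
  have hVB : VBᴴ * VB = 1 := by
    rw [← hRiso]
    ext j j'
    simp only [mul_apply, conjTranspose_apply, Fintype.sum_prod_type, VB, of_apply]
    refine Finset.sum_congr rfl fun q _ => ?_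
    rw [Fintype.sum_eq_single s₀ fun s hs => by simp [hR q s j' hs]]
  have hV : V = VA ⊗ₖ VB := by
    subst hV12
    ext ⟨p, q⟩ ⟨k, j⟩
    simp only [mul_apply, hS, kroneckerMap_apply, one_apply, ite_mul, one_mul, zero_mul, mul_ite,
      mul_zero, Fintype.sum_prod_type, Finset.sum_ite_irrel, Finset.sum_const_zero,
      Finset.sum_ite_eq, Finset.mem_univ, ↓reduceIte, Finset.sum_ite_eq', of_apply, VA, VB]
    exact Fintype.sum_eq_single s₀ fun s hs => by simp [hR q s j hs]
  have hViso : Vᴴ * V = 1 := by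
    rw [hV12, conjTranspose_mul, Matrix.mul_assoc, ← Matrix.mul_assoc T22ᴴ, hT22iso,
      Matrix.one_mul, hT12iso]
  exact ⟨VA, VB, conjTranspose_mul_self_eq_one_of_kronecker hVB (hV ▸ hViso), hVB, hV⟩

/-- (Matrix formulation, identifying the nonzero finite-dimensional complex Hilbert spaces
`H_A, H_B, K_A, K_B, L_0, L̃_0` with coordinate spaces indexed by `iA, iB, jA, jB, e, f`,
linear maps with matrices, tensor products with Kronecker products, and adjoints with
conjugate transposes.)  A local isometry `V : H_A ⊗ H_B → K_A ⊗ K_B`, i.e. one admitting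
commuting factorizations `V = T₂₂ ∘ T₁₂ = T₂₁ ∘ T₁₁` through `H_A ⊗ K_B ⊗ L_0` and
`K_A ⊗ H_B ⊗ L̃_0` by `A`-local and `B`-local isometries, splits: `V = V_A ⊗ V_B` for
isometries `V_A : H_A → K_A` and `V_B : H_B → K_B`. -/
theorem stmt_5 {iA iB jA jB e f : Type*}
    [Fintype iA] [Fintype iB] [Fintype jA] [Fintype jB] [Fintype e] [Fintype f]
    [DecidableEq iA] [DecidableEq iB] [DecidableEq jA] [DecidableEq jB]
    [DecidableEq e] [DecidableEq f]
    [Nonempty iA] [Nonempty iB] [Nonempty jA] [Nonempty jB] [Nonempty e] [Nonempty f]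
    (V : Matrix (jA × jB) (iA × iB) ℂ)
    (T12 : Matrix (iA × (jB × e)) (iA × iB) ℂ)
    (T22 : Matrix (jA × jB) (iA × (jB × e)) ℂ)
    (T11 : Matrix (jA × (iB × f)) (iA × iB) ℂ)
    (T21 : Matrix (jA × jB) (jA × (iB × f)) ℂ)
    (hV12 : V = T22 * T12) (hV11 : V = T21 * T11)
    (hT12iso : T12ᴴ * T12 = 1)
    (hT12mod : ∀ a : Matrix iA iA ℂ,
        T12 * (a ⊗ₖ (1 : Matrix iB iB ℂ)) = (a ⊗ₖ (1 : Matrix (jB × e) (jB × e) ℂ)) * T12)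
    (hT12loc : ∀ b : Matrix iB iB ℂ, ∃ b' : Matrix jB jB ℂ,
        T12 * ((1 : Matrix iA iA ℂ) ⊗ₖ b) * T12ᴴ
          = (1 : Matrix iA iA ℂ) ⊗ₖ (b' ⊗ₖ (1 : Matrix e e ℂ)))
    (hT22iso : T22ᴴ * T22 = 1)
    (hT22mod : ∀ b : Matrix jB jB ℂ,
        T22 * ((1 : Matrix iA iA ℂ) ⊗ₖ (b ⊗ₖ (1 : Matrix e e ℂ)))
          = ((1 : Matrix jA jA ℂ) ⊗ₖ b) * T22)
    (hT22loc : ∀ a : Matrix iA iA ℂ, ∃ a' : Matrix jA jA ℂ,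
        T22 * (a ⊗ₖ (1 : Matrix (jB × e) (jB × e) ℂ)) * T22ᴴ
          = a' ⊗ₖ (1 : Matrix jB jB ℂ))
    (hT11iso : T11ᴴ * T11 = 1)
    (hT11mod : ∀ b : Matrix iB iB ℂ,
        T11 * ((1 : Matrix iA iA ℂ) ⊗ₖ b)
          = ((1 : Matrix jA jA ℂ) ⊗ₖ (b ⊗ₖ (1 : Matrix f f ℂ))) * T11)
    (hT11loc : ∀ a : Matrix iA iA ℂ, ∃ a' : Matrix jA jA ℂ,
        T11 * (a ⊗ₖ (1 : Matrix iB iB ℂ)) * T11ᴴ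
          = a' ⊗ₖ (1 : Matrix (iB × f) (iB × f) ℂ))
    (hT21iso : T21ᴴ * T21 = 1)
    (hT21mod : ∀ a : Matrix jA jA ℂ,
        T21 * (a ⊗ₖ (1 : Matrix (iB × f) (iB × f) ℂ)) = (a ⊗ₖ (1 : Matrix jB jB ℂ)) * T21)
    (hT21loc : ∀ b : Matrix iB iB ℂ, ∃ b' : Matrix jB jB ℂ,
        T21 * ((1 : Matrix jA jA ℂ) ⊗ₖ (b ⊗ₖ (1 : Matrix f f ℂ))) * T21ᴴ
          = (1 : Matrix jA jA ℂ) ⊗ₖ b') :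
    ∃ (VA : Matrix jA iA ℂ) (VB : Matrix jB iB ℂ),
      VAᴴ * VA = 1 ∧ VBᴴ * VB = 1 ∧ V = VA ⊗ₖ VB :=
  stmt_5_general V T12 T22 hV12 hT12iso hT12mod hT12loc hT22iso hT22mod
end

section
/- Let H be a complex Hilbert space and A₀, A₁, B₀, B₁ bounded operators on H, each selfadjoint with A_i² = B_j² = 1, and satisfying A_i B_j = B_j A_i for all i, j ∈ {0,1}. Let ξ ∈ H be a unit vector with ⟨(A₀B₀ + A₀B₁ + A₁B₀ − A₁B₁)ξ, ξ⟩ = 2√2. Then (A₀ + A₁)ξ = √2·B₀ξ and (A₀ − A₁)ξ = √2·B₁ξ. -/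
/-!
With `C = A₀ + A₁ - √2 B₀` and `D = A₀ - A₁ - √2 B₁`, the relations `Aᵢ² = Bⱼ² = 1` and
`AᵢBⱼ = BⱼAᵢ` give the sum-of-squares decomposition `C² + D² = 8 - 2√2 β`. Since `C` and `D`
are selfadjoint, evaluating at the unit vector `ξ` gives
`‖Cξ‖² + ‖Dξ‖² = 8 - 2√2 · 2√2 = 0`, so `Cξ = Dξ = 0`.
-/

open scoped InnerProductSpace

theorem chsh_sum_of_squares {𝕜 R : Type*} [CommRing 𝕜] [Ring R] [Algebra 𝕜 R]
    {A₀ A₁ B₀ B₁ : R}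
    (hA₀ : A₀ * A₀ = 1) (hA₁ : A₁ * A₁ = 1) (hB₀ : B₀ * B₀ = 1) (hB₁ : B₁ * B₁ = 1)
    (h₀₀ : A₀ * B₀ = B₀ * A₀) (h₀₁ : A₀ * B₁ = B₁ * A₀)
    (h₁₀ : A₁ * B₀ = B₀ * A₁) (h₁₁ : A₁ * B₁ = B₁ * A₁) {s : 𝕜} (hs : s * s = 2) :
    (A₀ + A₁ - s • B₀) * (A₀ + A₁ - s • B₀) + (A₀ - A₁ - s • B₁) * (A₀ - A₁ - s • B₁)
      = 8 - (2 * s) • (A₀ * B₀ + A₀ * B₁ + A₁ * B₀ - A₁ * B₁) := by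
  simp only [sub_mul, mul_sub, add_mul, mul_add, smul_mul_assoc, mul_smul_comm,
    hA₀, hA₁, hB₀, hB₁, ← h₀₀, ← h₀₁, ← h₁₀, ← h₁₁]
  rw [show (8 : R) = (8 : 𝕜) • 1 by rw [Algebra.smul_def, mul_one, map_ofNat]]
  match_scalars
  · linear_combination 2 * hs
  all_goals ring

namespace IsSelfAdjoint

variable {𝕜 H : Type*} [RCLike 𝕜] [NormedAddCommGroup H] [InnerProductSpace 𝕜 H]
  [CompleteSpace H]

theorem inner_mul_self_apply {T : H →L[𝕜] H} (hT : IsSelfAdjoint T) (x : H) :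
    ⟪(T * T) x, x⟫_𝕜 = (‖T x‖ ^ 2 : 𝕜) := by
  rw [← inner_self_eq_norm_sq_to_K]
  exact hT.isSymmetric _ _

theorem apply_eq_zero_of_inner_mul_self_add_mul_self {T S : H →L[𝕜] H}
    (hT : IsSelfAdjoint T) (hS : IsSelfAdjoint S) {x : H}
    (h : ⟪(T * T + S * S) x, x⟫_𝕜 = 0) :
    T x = 0 ∧ S x = 0 := by
  rw [add_apply, inner_add_left, hT.inner_mul_self_apply, hS.inner_mul_self_apply] at h
  have hsum : ‖T x‖ ^ 2 + ‖S x‖ ^ 2 = 0 := by exact_mod_cast h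
  simpa using (add_eq_zero_iff_of_nonneg (sq_nonneg _) (sq_nonneg _)).1 hsum

end IsSelfAdjoint

/-- Let `A₀, A₁, B₀, B₁` be selfadjoint unitaries on a complex Hilbert space `H`, with each
`Aᵢ` commuting with each `Bⱼ`, and let `ξ` be a unit vector with
`⟨(A₀B₀ + A₀B₁ + A₁B₀ − A₁B₁)ξ, ξ⟩ = 2√2`.  Then `(A₀ + A₁)ξ = √2·B₀ξ` and
`(A₀ − A₁)ξ = √2·B₁ξ`. -/
theorem stmt_7 {H : Type*} [NormedAddCommGroup H] [InnerProductSpace ℂ H] [CompleteSpace H]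
    (A₀ A₁ B₀ B₁ : H →L[ℂ] H)
    (hA₀sa : IsSelfAdjoint A₀) (hA₁sa : IsSelfAdjoint A₁)
    (hB₀sa : IsSelfAdjoint B₀) (hB₁sa : IsSelfAdjoint B₁)
    (hA₀ : A₀ * A₀ = 1) (hA₁ : A₁ * A₁ = 1) (hB₀ : B₀ * B₀ = 1) (hB₁ : B₁ * B₁ = 1)
    (h₀₀ : A₀ * B₀ = B₀ * A₀) (h₀₁ : A₀ * B₁ = B₁ * A₀)
    (h₁₀ : A₁ * B₀ = B₀ * A₁) (h₁₁ : A₁ * B₁ = B₁ * A₁)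
    (ξ : H) (hξ : ‖ξ‖ = 1)
    (hval : (inner ℂ ((A₀ * B₀ + A₀ * B₁ + A₁ * B₀ - A₁ * B₁) ξ) ξ : ℂ)
      = ((2 * Real.sqrt 2 : ℝ) : ℂ)) :
    (A₀ + A₁) ξ = ((Real.sqrt 2 : ℝ) : ℂ) • (B₀ ξ) ∧
      (A₀ - A₁) ξ = ((Real.sqrt 2 : ℝ) : ℂ) • (B₁ ξ) := by
  set s : ℂ := ((Real.sqrt 2 : ℝ) : ℂ)
  have hs : s * s = 2 := by
    rw [← Complex.ofReal_mul, Real.mul_self_sqrt zero_le_two, Complex.ofReal_ofNat]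
  have hs_sa : IsSelfAdjoint s := Complex.conj_ofReal _
  have hzero : ⟪((A₀ + A₁ - s • B₀) * (A₀ + A₁ - s • B₀)
      + (A₀ - A₁ - s • B₁) * (A₀ - A₁ - s • B₁)) ξ, ξ⟫_ℂ = 0 := by
    rw [chsh_sum_of_squares hA₀ hA₁ hB₀ hB₁ h₀₀ h₀₁ h₁₀ h₁₁ hs, sub_apply, inner_sub_left,
      smul_apply, inner_smul_left, hval, ContinuousLinearMap.ofNat_apply,
      ← Nat.cast_smul_eq_nsmul ℂ, inner_smul_left, inner_self_eq_norm_sq_to_K, hξ]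
    simp only [map_mul, map_ofNat, map_natCast, s, Complex.conj_ofReal]
    push_cast
    linear_combination (-4) * hs
  obtain ⟨hplus, hminus⟩ :=
    ((hA₀sa.add hA₁sa).sub (hs_sa.smul hB₀sa)).apply_eq_zero_of_inner_mul_self_add_mul_self
      ((hA₀sa.sub hA₁sa).sub (hs_sa.smul hB₁sa)) hzero
  exact ⟨sub_eq_zero.1 hplus, sub_eq_zero.1 hminus⟩
end

section
/- Let H be a complex Hilbert space and A₀, A₁, B₀, B₁ bounded operators on H, each selfadjoint with A_i² = B_j² = 1, and satisfying A_i B_j = B_j A_i for all i, j ∈ {0,1}. Let ξ ∈ H be a unit vector with ⟨(A₀B₀ + A₀B₁ + A₁B₀ − A₁B₁)ξ, ξ⟩ = 2√2. Then (A₀A₁ + A₁A₀)ξ = 0 and (B₀B₁ + B₁B₀)ξ = 0. -/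
/-!
Tsirelson's bound comes with a sum-of-squares certificate: for `P = √2 A₀ - B₀ - B₁` and
`Q = √2 A₁ - B₀ + B₁` one has `P² + Q² = 8 - 2√2 β`, where `β = chshBias A₀ A₁ B₀ B₁`.
If `⟨β ξ, ξ⟩ = 2√2`, then `‖P ξ‖² + ‖Q ξ‖² = 0`, so `√2 A₀ ξ = (B₀ + B₁) ξ` and
`√2 A₁ ξ = (B₀ - B₁) ξ`. Since the `Aᵢ` commute with the `Bⱼ`, products of the `Aᵢ` applied
to `ξ` can then be traded for products of the `Bⱼ`:
`2 (A₀A₁ + A₁A₀) ξ = ((B₀ - B₁)(B₀ + B₁) + (B₀ + B₁)(B₀ - B₁)) ξ = 0` and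
`2 ξ = 2 A₀² ξ = (B₀ + B₁)² ξ = (2 + B₀B₁ + B₁B₀) ξ`.
-/

open ContinuousLinearMap

section Action

variable {R M : Type*}

theorem mul_smul_eq_of_smul_eq [Monoid R] [MulAction R M] {a b a' b' : R} {x : M}
    (h : a • x = b • x) (h' : a' • x = b' • x) (hc : Commute a b') :
    (a * a') • x = (b' * b) • x := by
  rw [mul_smul, h', ← mul_smul, hc.eq, mul_smul, h, mul_smul]

variable [Ring R] [AddCommGroup M] [Module R M] {X₀ X₁ B₀ B₁ : R} {x : M}

theorem anticommutator_smul_eq_zero_of_smul_eq (hB₀ : B₀ * B₀ = 1) (hB₁ : B₁ * B₁ = 1)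
    (hc₀₀ : Commute X₀ B₀) (hc₀₁ : Commute X₀ B₁) (hc₁₀ : Commute X₁ B₀) (hc₁₁ : Commute X₁ B₁)
    (h₀ : X₀ • x = (B₀ + B₁) • x) (h₁ : X₁ • x = (B₀ - B₁) • x) :
    (X₀ * X₁ + X₁ * X₀) • x = 0 := by
  have hB : (B₀ - B₁) * (B₀ + B₁) + (B₀ + B₁) * (B₀ - B₁) = 0 := by
    noncomm_ring
    rw [hB₀, hB₁]
    abel
  rw [add_smul, mul_smul_eq_of_smul_eq h₀ h₁ (hc₀₀.sub_right hc₀₁),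
    mul_smul_eq_of_smul_eq h₁ h₀ (hc₁₀.add_right hc₁₁), ← add_smul, hB, zero_smul]

theorem anticommutator_smul_eq_zero_of_mul_self (hX : X₀ * X₀ = 2) (hB₀ : B₀ * B₀ = 1)
    (hB₁ : B₁ * B₁ = 1) (hc₀ : Commute X₀ B₀) (hc₁ : Commute X₀ B₁)
    (h : X₀ • x = (B₀ + B₁) • x) :
    (B₀ * B₁ + B₁ * B₀) • x = 0 := by
  have hB : (B₀ + B₁) * (B₀ + B₁) = 2 + (B₀ * B₁ + B₁ * B₀) := by
    rw [add_mul, mul_add, mul_add, hB₀, hB₁, ← one_add_one_eq_two]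
    abel
  have := mul_smul_eq_of_smul_eq h h (hc₀.add_right hc₁)
  rwa [hX, hB, add_smul, left_eq_add] at this

end Action

section InnerProductSpace

variable {𝕜 E : Type*} [RCLike 𝕜] [NormedAddCommGroup E] [InnerProductSpace 𝕜 E]
  [CompleteSpace E]

theorem IsSelfAdjoint.inner_mul_self_apply_s8 {T : E →L[𝕜] E} (hT : IsSelfAdjoint T) (x : E) :
    inner 𝕜 ((T * T) x) x = (‖T x‖ ^ 2 : 𝕜) := by
  rw [mul_apply_eq_comp, ← hT.adjoint_eq, adjoint_inner_left, hT.adjoint_eq,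
    inner_self_eq_norm_sq_to_K]

theorem apply_eq_zero_of_inner_mul_self_add_mul_self_eq_zero {P Q : E →L[𝕜] E}
    (hP : IsSelfAdjoint P) (hQ : IsSelfAdjoint Q) {x : E}
    (h : inner 𝕜 ((P * P + Q * Q) x) x = 0) :
    P x = 0 ∧ Q x = 0 := by
  rw [add_apply, inner_add_left, hP.inner_mul_self_apply_s8, hQ.inner_mul_self_apply_s8] at h
  have h' : ‖P x‖ ^ 2 + ‖Q x‖ ^ 2 = 0 := by exact_mod_cast h
  simpa [add_eq_zero_iff_of_nonneg, sq_nonneg] using h'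

end InnerProductSpace

def chshBias {R : Type*} [Ring R] (A₀ A₁ B₀ B₁ : R) : R :=
  A₀ * B₀ + A₀ * B₁ + A₁ * B₀ - A₁ * B₁

theorem mul_self_add_mul_self_eq_eight_sub_smul_chshBias {𝕜 R : Type*} [CommRing 𝕜] [Ring R]
    [Algebra 𝕜 R] {s : 𝕜} (hs : s * s = 2) {A₀ A₁ B₀ B₁ : R}
    (hA₀ : A₀ * A₀ = 1) (hA₁ : A₁ * A₁ = 1) (hB₀ : B₀ * B₀ = 1) (hB₁ : B₁ * B₁ = 1)
    (h₀₀ : A₀ * B₀ = B₀ * A₀) (h₀₁ : A₀ * B₁ = B₁ * A₀)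
    (h₁₀ : A₁ * B₀ = B₀ * A₁) (h₁₁ : A₁ * B₁ = B₁ * A₁) :
    (s • A₀ - B₀ - B₁) * (s • A₀ - B₀ - B₁) + (s • A₁ - B₀ + B₁) * (s • A₁ - B₀ + B₁) =
      (8 : 𝕜) • 1 - (2 * s) • chshBias A₀ A₁ B₀ B₁ := by
  simp only [chshBias, mul_sub, sub_mul, mul_add, add_mul, smul_mul_assoc, mul_smul_comm,
    smul_smul, hs, smul_add, smul_sub, hA₀, hA₁, hB₀, hB₁, ← h₀₀, ← h₀₁, ← h₁₀, ← h₁₁]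
  module

theorem ofReal_sqrt_two_mul_self : ((√2 : ℝ) : ℂ) * ((√2 : ℝ) : ℂ) = 2 := by
  rw [← Complex.ofReal_mul, Real.mul_self_sqrt zero_le_two, Complex.ofReal_ofNat]

theorem sqrt_two_smul_apply_eq_of_inner_chshBias_eq {H : Type*} [NormedAddCommGroup H]
    [InnerProductSpace ℂ H] [CompleteSpace H] {A₀ A₁ B₀ B₁ : H →L[ℂ] H}
    (hA₀sa : IsSelfAdjoint A₀) (hA₁sa : IsSelfAdjoint A₁)
    (hB₀sa : IsSelfAdjoint B₀) (hB₁sa : IsSelfAdjoint B₁)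
    (hA₀ : A₀ * A₀ = 1) (hA₁ : A₁ * A₁ = 1) (hB₀ : B₀ * B₀ = 1) (hB₁ : B₁ * B₁ = 1)
    (h₀₀ : A₀ * B₀ = B₀ * A₀) (h₀₁ : A₀ * B₁ = B₁ * A₀)
    (h₁₀ : A₁ * B₀ = B₀ * A₁) (h₁₁ : A₁ * B₁ = B₁ * A₁) {ξ : H} (hξ : ‖ξ‖ = 1)
    (hval : inner ℂ (chshBias A₀ A₁ B₀ B₁ ξ) ξ = ((2 * √2 : ℝ) : ℂ)) :
    (((√2 : ℝ) : ℂ) • A₀) ξ = (B₀ + B₁) ξ ∧ (((√2 : ℝ) : ℂ) • A₁) ξ = (B₀ - B₁) ξ := by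
  set s : ℂ := ((√2 : ℝ) : ℂ)
  have hs_sa : IsSelfAdjoint s := Complex.conj_ofReal _
  have hval' : inner ℂ (chshBias A₀ A₁ B₀ B₁ ξ) ξ = 2 * s := by
    rw [hval, Complex.ofReal_mul, Complex.ofReal_ofNat]
  have hzero : inner ℂ (((s • A₀ - B₀ - B₁) * (s • A₀ - B₀ - B₁) +
      (s • A₁ - B₀ + B₁) * (s • A₁ - B₀ + B₁)) ξ) ξ = 0 := by
    rw [mul_self_add_mul_self_eq_eight_sub_smul_chshBias ofReal_sqrt_two_mul_self
        hA₀ hA₁ hB₀ hB₁ h₀₀ h₀₁ h₁₀ h₁₁,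
      sub_apply, inner_sub_left, smul_apply, smul_apply, one_apply_eq_self, inner_smul_left,
      inner_smul_left, inner_self_eq_norm_sq_to_K, hξ, hval', map_mul, map_ofNat, map_ofNat,
      starRingEnd_apply, hs_sa.star_eq, RCLike.ofReal_one]
    linear_combination (-4 : ℂ) * ofReal_sqrt_two_mul_self
  obtain ⟨hP, hQ⟩ := apply_eq_zero_of_inner_mul_self_add_mul_self_eq_zero
    (((hs_sa.smul hA₀sa).sub hB₀sa).sub hB₁sa) (((hs_sa.smul hA₁sa).sub hB₀sa).add hB₁sa) hzero
  constructor
  · rwa [sub_sub, sub_apply, sub_eq_zero] at hP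
  · rwa [sub_add, sub_apply, sub_eq_zero] at hQ

/-- Let `A₀, A₁, B₀, B₁` be selfadjoint unitaries on a complex Hilbert space `H`, with each
`Aᵢ` commuting with each `Bⱼ`, and let `ξ` be a unit vector with
`⟨(A₀B₀ + A₀B₁ + A₁B₀ − A₁B₁)ξ, ξ⟩ = 2√2`.  Then `(A₀A₁ + A₁A₀)ξ = 0` and
`(B₀B₁ + B₁B₀)ξ = 0`. -/
theorem stmt_8 {H : Type*} [NormedAddCommGroup H] [InnerProductSpace ℂ H] [CompleteSpace H]
    (A₀ A₁ B₀ B₁ : H →L[ℂ] H)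
    (hA₀sa : IsSelfAdjoint A₀) (hA₁sa : IsSelfAdjoint A₁)
    (hB₀sa : IsSelfAdjoint B₀) (hB₁sa : IsSelfAdjoint B₁)
    (hA₀ : A₀ * A₀ = 1) (hA₁ : A₁ * A₁ = 1) (hB₀ : B₀ * B₀ = 1) (hB₁ : B₁ * B₁ = 1)
    (h₀₀ : A₀ * B₀ = B₀ * A₀) (h₀₁ : A₀ * B₁ = B₁ * A₀)
    (h₁₀ : A₁ * B₀ = B₀ * A₁) (h₁₁ : A₁ * B₁ = B₁ * A₁)
    (ξ : H) (hξ : ‖ξ‖ = 1)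
    (hval : (inner ℂ ((A₀ * B₀ + A₀ * B₁ + A₁ * B₀ - A₁ * B₁) ξ) ξ : ℂ)
      = ((2 * Real.sqrt 2 : ℝ) : ℂ)) :
    (A₀ * A₁ + A₁ * A₀) ξ = 0 ∧ (B₀ * B₁ + B₁ * B₀) ξ = 0 := by
  set s : ℂ := ((√2 : ℝ) : ℂ)
  obtain ⟨h₀, h₁⟩ := sqrt_two_smul_apply_eq_of_inner_chshBias_eq hA₀sa hA₁sa hB₀sa hB₁sa
    hA₀ hA₁ hB₀ hB₁ h₀₀ h₀₁ h₁₀ h₁₁ hξ hval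
  have hc₀₀ : Commute (s • A₀) B₀ := Commute.smul_left h₀₀ s
  have hc₀₁ : Commute (s • A₀) B₁ := Commute.smul_left h₀₁ s
  constructor
  · have hanti := anticommutator_smul_eq_zero_of_smul_eq hB₀ hB₁ hc₀₀ hc₀₁
      (Commute.smul_left h₁₀ s) (Commute.smul_left h₁₁ s) h₀ h₁
    rw [smul_mul_smul, smul_mul_smul, ← smul_add, ofReal_sqrt_two_mul_self,
      ContinuousLinearMap.smul_def, smul_apply] at hanti
    exact (smul_eq_zero.mp hanti).resolve_left two_ne_zero
  · have hX : s • A₀ * s • A₀ = 2 := by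
      rw [smul_mul_smul, ofReal_sqrt_two_mul_self, hA₀, two_smul, one_add_one_eq_two]
    exact anticommutator_smul_eq_zero_of_mul_self hX hB₀ hB₁ hc₀₀ hc₀₁ h₀
end

section
/- Let H and K be complex Hilbert spaces, X a finite set, and (v_{a,x})_{a,x ∈ X} a family of bounded operators from H to K satisfying Σ_{a∈X} v_{a,x}* v_{a,x'} = δ_{x,x'} 1_H for all x, x' ∈ X (that is, the block operator matrix (v_{a,x})_{a,x}, regarded as an operator from the direct sum H^X to K^X, is an isometry). Then there exist a complex Hilbert space L, isometries w₁ : H → L and w₂ : K → L, and a family (U_{a,x})_{a,x∈X} of bounded operators on L such that the block operator matrix (U_{a,x})_{a,x} is a unitary operator on L^X, and for all a, x ∈ X: v_{a,x} = w₂* U_{a,x} w₁ and w₂ w₂* U_{a,x} w₁ = U_{a,x} w₁. -/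
/-!
Embed `H` and `K` as orthogonal summands of `L = H ⊕ K` via `ι₁, ι₂`, and view block operator
matrices over `L` as `X × X` matrices over the C⋆-algebra `L →L[ℂ] L`. There `v` becomes
`V = (ι₂ v_{a,x} ι₁*)`, a partial isometry with `V*V = p := diag(ι₁ ι₁*)` and `pV = 0`.
Halmos' trick then gives the self-adjoint unitary `U = V + V* + (1 - p - VV*)`, i.e. the block
matrix `[[0, V*], [V, 1 - VV*]]`, and `U p = V` says exactly `U_{a,x} ι₁ = ι₂ v_{a,x}`.
-/

open ContinuousLinearMap Matrix

section StarRing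
variable {R : Type*} [Ring R] [StarRing R]

def unitaryDilation (p V : R) : R := V + star V + (1 - p - V * star V)

variable {p V : R}
variable (hV : star V * V = p) (hVp : V * p = V) (hpV : p * V = 0)

include hV in
lemma isSelfAdjoint_unitaryDilation : IsSelfAdjoint (unitaryDilation p V) := by
  have hp : star p = p := by rw [← hV, star_mul, star_star]
  simp only [IsSelfAdjoint, unitaryDilation, star_add, star_sub, star_one, star_mul, star_star, hp]
  abel

include hV hpV in
lemma star_mul_eq_zero_of_star_mul_self_eq : star V * p = 0 := by
  rw [← (hV ▸ IsSelfAdjoint.star_mul_self V : IsSelfAdjoint p).star_eq, ← star_mul, hpV, star_zero]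

include hV hVp in
lemma mul_self_eq_of_star_mul_self_eq : p * p = p := by
  calc p * p = star V * (V * p) := by rw [← mul_assoc, hV]
    _ = p := by rw [hVp, hV]

include hV hVp hpV

lemma unitaryDilation_mul_self : unitaryDilation p V * unitaryDilation p V = 1 := by
  have hpV' : p * star V = star V := by
    rw [← (hV ▸ IsSelfAdjoint.star_mul_self V : IsSelfAdjoint p).star_eq, ← star_mul, hVp]
  have hVV : V * V = 0 := by
    calc V * V = V * p * V := by rw [hVp]
      _ = 0 := by rw [mul_assoc, hpV, mul_zero]
  have hV'V' : star V * star V = 0 := by rw [← star_mul, hVV, star_zero]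
  unfold unitaryDilation
  set r := 1 - p - V * star V
  -- all cross terms of `(V + V* + r)²` vanish and `r` is idempotent
  have hVr : V * r = 0 := by
    simp only [r, mul_sub, mul_one, hVp, ← mul_assoc, hVV, zero_mul, sub_self]
  have hrV : r * V = 0 := by
    simp only [r, sub_mul, one_mul, hpV, mul_assoc, hV, hVp, sub_self, sub_zero]
  have hV'r : star V * r = 0 := by
    simp only [r, mul_sub, mul_one, star_mul_eq_zero_of_star_mul_self_eq hV hpV, ← mul_assoc,
      hV, hpV', sub_self, sub_zero]
  have hrV' : r * star V = 0 := by
    simp only [r, sub_mul, one_mul, hpV', mul_assoc, hV'V', mul_zero, sub_self]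
  have hrr : r * r = r := by
    calc r * r = r - (p - p * p - V * (star V * p)) - r * V * star V := by
          simp only [r, mul_sub, sub_mul, mul_one, one_mul, mul_assoc]
      _ = r := by
          rw [mul_self_eq_of_star_mul_self_eq hV hVp, star_mul_eq_zero_of_star_mul_self_eq hV hpV,
            hrV]
          simp
  calc (V + star V + r) * (V + star V + r) = V * star V + star V * V + r := by
        simp only [add_mul, mul_add, hVV, hV'V', hVr, hrV, hV'r, hrV', hrr]; abel
    _ = 1 := by rw [hV]; simp only [r]; abel

lemma unitaryDilation_mul_proj : unitaryDilation p V * p = V := by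
  simp only [unitaryDilation, add_mul, sub_mul, one_mul, hVp, mul_assoc,
    star_mul_eq_zero_of_star_mul_self_eq hV hpV, mul_self_eq_of_star_mul_self_eq hV hVp]
  simp

lemma unitaryDilation_mem_unitary : unitaryDilation p V ∈ unitary R := by
  have hU := unitaryDilation_mul_self hV hVp hpV
  rw [Unitary.mem_iff, (isSelfAdjoint_unitaryDilation hV).star_eq]
  exact ⟨hU, hU⟩

end StarRing

section BlockMatrix
variable {X : Type*} [Fintype X]
  {H K L : Type*} [NormedAddCommGroup H] [InnerProductSpace ℂ H] [CompleteSpace H]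
  [NormedAddCommGroup K] [InnerProductSpace ℂ K]
  [NormedAddCommGroup L] [InnerProductSpace ℂ L] [CompleteSpace L]

lemma Matrix.star_mul_apply_eq_sum_adjoint_comp (M N : Matrix X X (L →L[ℂ] L)) (i j : X) :
    (star M * N) i j = ∑ k, adjoint (M k i) ∘L N k j := rfl

lemma Matrix.mul_star_apply_eq_sum_comp_adjoint (M N : Matrix X X (L →L[ℂ] L)) (i j : X) :
    (M * star N) i j = ∑ k, M i k ∘L adjoint (N j k) := rfl

variable [DecidableEq X] (ι₁ : H →L[ℂ] L) (ι₂ : K →L[ℂ] L) (v : X → X → H →L[ℂ] K)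

noncomputable def transportBlock : Matrix X X (L →L[ℂ] L) :=
  Matrix.of fun a x => ι₂ ∘L v a x ∘L adjoint ι₁

noncomputable def rangeProjBlock : Matrix X X (L →L[ℂ] L) :=
  Matrix.diagonal fun _ => ι₁ ∘L adjoint ι₁

noncomputable def blockUnitaryDilation : Matrix X X (L →L[ℂ] L) :=
  unitaryDilation (rangeProjBlock ι₁) (transportBlock ι₁ ι₂ v)

variable {ι₁ ι₂ v}

lemma star_transportBlock_mul_self [CompleteSpace K] (hι₂ : adjoint ι₂ ∘L ι₂ = 1)
    (hv : ∀ x x' : X, ∑ a : X, adjoint (v a x) ∘L v a x' = if x = x' then 1 else 0) :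
    star (transportBlock ι₁ ι₂ v) * transportBlock ι₁ ι₂ v = rangeProjBlock ι₁ := by
  ext x x' : 1
  have hentry : ∀ a, adjoint (ι₂ ∘L v a x ∘L adjoint ι₁) ∘L (ι₂ ∘L v a x' ∘L adjoint ι₁)
      = ι₁ ∘L (adjoint (v a x) ∘L v a x') ∘L adjoint ι₁ := by
    intro a
    simp only [adjoint_comp, adjoint_adjoint, comp_assoc]
    rw [← comp_assoc (adjoint ι₂), hι₂, one_def, id_comp]
  rw [Matrix.star_mul_apply_eq_sum_adjoint_comp]
  simp only [transportBlock, Matrix.of_apply, hentry, ← comp_finsetSum, ← finsetSum_comp, hv,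
    rangeProjBlock, Matrix.diagonal_apply]
  split_ifs
  · rfl
  · rw [zero_comp, comp_zero]

lemma transportBlock_mul_rangeProjBlock (hι₁ : adjoint ι₁ ∘L ι₁ = 1) :
    transportBlock ι₁ ι₂ v * rangeProjBlock ι₁ = transportBlock ι₁ ι₂ v := by
  ext a x : 1
  simp only [rangeProjBlock, Matrix.mul_diagonal, transportBlock, Matrix.of_apply, mul_def,
    comp_assoc]
  rw [← comp_assoc (adjoint ι₁), hι₁, one_def, id_comp]

lemma rangeProjBlock_mul_transportBlock (hι₁₂ : adjoint ι₁ ∘L ι₂ = 0) :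
    rangeProjBlock ι₁ * transportBlock ι₁ ι₂ v = 0 := by
  ext a x : 1
  simp only [rangeProjBlock, Matrix.diagonal_mul, transportBlock, Matrix.of_apply, mul_def,
    comp_assoc]
  rw [← comp_assoc (adjoint ι₁), hι₁₂, zero_comp, comp_zero, Matrix.zero_apply]

variable [CompleteSpace K] (hι₁ : adjoint ι₁ ∘L ι₁ = 1) (hι₂ : adjoint ι₂ ∘L ι₂ = 1)
  (hι₁₂ : adjoint ι₁ ∘L ι₂ = 0)
  (hv : ∀ x x' : X, ∑ a : X, adjoint (v a x) ∘L v a x' = if x = x' then 1 else 0)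
include hι₁ hι₂ hι₁₂ hv

lemma blockUnitaryDilation_mem_unitary : blockUnitaryDilation ι₁ ι₂ v ∈ unitary _ :=
  unitaryDilation_mem_unitary (star_transportBlock_mul_self hι₂ hv)
    (transportBlock_mul_rangeProjBlock hι₁) (rangeProjBlock_mul_transportBlock hι₁₂)

lemma blockUnitaryDilation_mul_rangeProjBlock :
    blockUnitaryDilation ι₁ ι₂ v * rangeProjBlock ι₁ = transportBlock ι₁ ι₂ v :=
  unitaryDilation_mul_proj (star_transportBlock_mul_self hι₂ hv)
    (transportBlock_mul_rangeProjBlock hι₁) (rangeProjBlock_mul_transportBlock hι₁₂)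

lemma blockUnitaryDilation_apply_comp (a x : X) :
    blockUnitaryDilation ι₁ ι₂ v a x ∘L ι₁ = ι₂ ∘L v a x := by
  have h := Matrix.ext_iff.mpr (blockUnitaryDilation_mul_rangeProjBlock hι₁ hι₂ hι₁₂ hv) a x
  rw [rangeProjBlock, Matrix.mul_diagonal, mul_def, transportBlock, Matrix.of_apply] at h
  calc _ = (blockUnitaryDilation ι₁ ι₂ v a x ∘L ι₁ ∘L adjoint ι₁) ∘L ι₁ := by
        rw [comp_assoc, comp_assoc, hι₁, one_def, comp_id]
    _ = ι₂ ∘L v a x := by rw [h, comp_assoc, comp_assoc, hι₁, one_def, comp_id]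

end BlockMatrix

section L2Prod
variable (H K : Type*) [NormedAddCommGroup H] [InnerProductSpace ℂ H]
  [NormedAddCommGroup K] [InnerProductSpace ℂ K]

noncomputable def l2Inl : H →L[ℂ] WithLp 2 (H × K) :=
  (WithLp.prodContinuousLinearEquiv 2 ℂ H K).symm.toContinuousLinearMap ∘L inl ℂ H K

noncomputable def l2Inr : K →L[ℂ] WithLp 2 (H × K) :=
  (WithLp.prodContinuousLinearEquiv 2 ℂ H K).symm.toContinuousLinearMap ∘L inr ℂ H K

variable {H K}

lemma norm_l2Inl (h : H) : ‖l2Inl H K h‖ = ‖h‖ := WithLp.norm_toLp_fst 2 H K h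

lemma norm_l2Inr (k : K) : ‖l2Inr H K k‖ = ‖k‖ := WithLp.norm_toLp_snd 2 H K k

lemma adjoint_l2Inl_comp_l2Inr [CompleteSpace H] [CompleteSpace K] :
    adjoint (l2Inl H K) ∘L l2Inr H K = 0 := by
  ext k : 1
  refine ext_inner_left ℂ fun h => ?_
  simp [adjoint_inner_right, l2Inl, l2Inr]

end L2Prod

universe u

/-- Every block operator isometry `(v_{a,x})_{a,x∈X}` between complex Hilbert spaces `H`
and `K` dilates to a block operator unitary: there are a Hilbert space `L`, isometries
`w₁ : H → L`, `w₂ : K → L` and a family `(U_{a,x})` whose block operator matrix is unitary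
(expressed by the relations `Σ_a U_{a,x}* U_{a,x'} = δ_{x,x'} 1` and
`Σ_x U_{a,x} U_{a',x}* = δ_{a,a'} 1`) with `v_{a,x} = w₂* U_{a,x} w₁` and
`w₂ w₂* U_{a,x} w₁ = U_{a,x} w₁` for all `a, x ∈ X`. -/
theorem stmt_16 {H K : Type u}
    [NormedAddCommGroup H] [InnerProductSpace ℂ H] [CompleteSpace H]
    [NormedAddCommGroup K] [InnerProductSpace ℂ K] [CompleteSpace K]
    (X : Type) [Fintype X] [DecidableEq X]
    (v : X → X → H →L[ℂ] K)
    (hv : ∀ x x' : X, ∑ a : X, ContinuousLinearMap.adjoint (v a x) ∘L v a x'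
        = if x = x' then (1 : H →L[ℂ] H) else 0) :
    ∃ (L : Type u) (_ : NormedAddCommGroup L) (_ : InnerProductSpace ℂ L)
      (_ : CompleteSpace L) (w₁ : H →L[ℂ] L) (w₂ : K →L[ℂ] L) (U : X → X → L →L[ℂ] L),
      (∀ h : H, ‖w₁ h‖ = ‖h‖) ∧ (∀ k : K, ‖w₂ k‖ = ‖k‖) ∧
      (∀ x x' : X, ∑ a : X, ContinuousLinearMap.adjoint (U a x) ∘L U a x'
          = if x = x' then (1 : L →L[ℂ] L) else 0) ∧
      (∀ a a' : X, ∑ x : X, U a x ∘L ContinuousLinearMap.adjoint (U a' x)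
          = if a = a' then (1 : L →L[ℂ] L) else 0) ∧
      (∀ a x : X, v a x = ContinuousLinearMap.adjoint w₂ ∘L U a x ∘L w₁) ∧
      (∀ a x : X, w₂ ∘L ContinuousLinearMap.adjoint w₂ ∘L U a x ∘L w₁ = U a x ∘L w₁) := by
  have hι₁ := (norm_map_iff_adjoint_comp_self (l2Inl H K)).1 norm_l2Inl
  have hι₂ := (norm_map_iff_adjoint_comp_self (l2Inr H K)).1 norm_l2Inr
  have hU := blockUnitaryDilation_mem_unitary hι₁ hι₂ adjoint_l2Inl_comp_l2Inr hv
  have hUι₁ := blockUnitaryDilation_apply_comp hι₁ hι₂ adjoint_l2Inl_comp_l2Inr hv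
  have hcompress : ∀ a x,
      adjoint (l2Inr H K) ∘L blockUnitaryDilation (l2Inl H K) (l2Inr H K) v a x ∘L l2Inl H K
        = v a x := fun a x => by
    rw [hUι₁, ← comp_assoc, hι₂, one_def, id_comp]
  refine ⟨WithLp 2 (H × K), inferInstance, inferInstance, inferInstance, l2Inl H K, l2Inr H K,
    blockUnitaryDilation (l2Inl H K) (l2Inr H K) v,
    norm_l2Inl, norm_l2Inr, fun x x' => ?_, fun a a' => ?_, fun a x => ?_, fun a x => ?_⟩
  · rw [← Matrix.star_mul_apply_eq_sum_adjoint_comp, Unitary.star_mul_self_of_mem hU,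
      Matrix.one_apply]
  · rw [← Matrix.mul_star_apply_eq_sum_comp_adjoint, Unitary.mul_star_self_of_mem hU,
      Matrix.one_apply]
  · exact (hcompress a x).symm
  · rw [hcompress, hUι₁]
end
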